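/- Let Δ ≥ 3 and n be integers, and let k be an integer with 0 ≤ k. Define χ(k) = (Δ−k)/√(Δ+1) + k/√(Δ+2) + k/√3 + (n−1−Δ−k)/2. Then χ is strictly increasing in k; in particular, if n/2 ≤ Δ ≤ n−1 and 0 ≤ k ≤ n−Δ−1, its maximum is (2Δ−n+1)/√(Δ+1) + (n−Δ−1)/√(Δ+2) + (n−Δ−1)/√3, attained only at k = n−Δ−1; and if 2 ≤ Δ ≤ (n−1)/2 and 0 ≤ k ≤ Δ, its maximum is (n−1−2Δ)/2 + Δ/√3 + Δ/√(Δ+2), attained only at k = Δ. -/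

import Mathlib

/-!
Replacing a pendant leg of the spider by a leg of length at least two changes `χ` by the constant
`1/√(Δ+2) + 1/√3 - 1/√(Δ+1) - 1/2`, so `χ` is an arithmetic progression in `k`. Its step is
positive because `1/√(Δ+1) - 1/√(Δ+2) ≤ 1/16 < 1/√3 - 1/2` for `Δ ≥ 3`; hence `χ` is strictly
increasing and is maximised exactly at the largest admissible `k`.
-/

open Real

noncomputable def spiderSumConnectivity (n Δ k : ℕ) : ℝ :=
  ((Δ : ℝ) - k) / √((Δ : ℝ) + 1) + (k : ℝ) / √((Δ : ℝ) + 2) + (k : ℝ) / √3 +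
    ((n : ℝ) - 1 - Δ - k) / 2

/-- Since `√(x+1) - √x = 1 / (√x + √(x+1)) ≤ 1/4` and `√x √(x+1) ≥ 4`. -/
lemma inv_sqrt_sub_inv_sqrt_add_one_le {x : ℝ} (hx : 4 ≤ x) :
    1 / √x - 1 / √(x + 1) ≤ 1 / 16 := by
  have ha : 2 ≤ √x := by
    rw [show (2 : ℝ) = √4 by rw [show (4 : ℝ) = 2 ^ 2 by norm_num, sqrt_sq zero_le_two]]
    exact sqrt_le_sqrt hx
  have hab : √x ≤ √(x + 1) := sqrt_le_sqrt (by linarith)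
  have hsq : √(x + 1) ^ 2 - √x ^ 2 = 1 := by
    rw [sq_sqrt (by linarith), sq_sqrt (by linarith)]; ring
  rw [div_sub_div _ _ (by positivity) (by positivity), div_le_div_iff₀ (by positivity) (by norm_num)]
  nlinarith [mul_nonneg (sub_nonneg.mpr hab) (by linarith : (0 : ℝ) ≤ √x + √(x + 1) - 4)]

/-- Equivalent to `243 = 9² · 3 < 16² = 256`. -/
lemma one_div_sixteen_lt_inv_sqrt_three_sub_half : 1 / 16 < 1 / √3 - 1 / 2 := by
  have h3 : √3 ^ 2 = 3 := sq_sqrt (by norm_num)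
  have hpos : 0 < √3 := by positivity
  have : (9 : ℝ) / 16 < 1 / √3 := by
    rw [div_lt_div_iff₀ (by norm_num) hpos]
    nlinarith [sq_nonneg (3 * √3 - 5)]
  linarith

lemma spiderSumConnectivity_step_pos {Δ : ℕ} (hΔ : 3 ≤ Δ) :
    0 < 1 / √((Δ : ℝ) + 2) + 1 / √3 - 1 / √((Δ : ℝ) + 1) - 1 / 2 := by
  have hΔ' : (4 : ℝ) ≤ Δ + 1 := by exact_mod_cast Nat.succ_le_succ hΔ
  have h := inv_sqrt_sub_inv_sqrt_add_one_le hΔ'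
  rw [add_assoc, one_add_one_eq_two] at h
  linarith [one_div_sixteen_lt_inv_sqrt_three_sub_half]

lemma spiderSumConnectivity_succ (n Δ k : ℕ) :
    spiderSumConnectivity n Δ (k + 1) = spiderSumConnectivity n Δ k +
      (1 / √((Δ : ℝ) + 2) + 1 / √3 - 1 / √((Δ : ℝ) + 1) - 1 / 2) := by
  unfold spiderSumConnectivity
  push_cast
  ring

lemma spiderSumConnectivity_strictMono (n : ℕ) {Δ : ℕ} (hΔ : 3 ≤ Δ) :
    StrictMono (spiderSumConnectivity n Δ) :=
  strictMono_nat_of_lt_succ fun k => by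
    rw [spiderSumConnectivity_succ]
    linarith [spiderSumConnectivity_step_pos hΔ]

lemma spiderSumConnectivity_sub_sub_one {n Δ : ℕ} (h : Δ + 1 ≤ n) :
    spiderSumConnectivity n Δ (n - Δ - 1) =
      (2 * (Δ : ℝ) - n + 1) / √((Δ : ℝ) + 1) + ((n : ℝ) - Δ - 1) / √((Δ : ℝ) + 2) +
        ((n : ℝ) - Δ - 1) / √3 := by
  unfold spiderSumConnectivity
  rw [Nat.cast_sub (by omega), Nat.cast_sub (by omega)]
  ring

lemma spiderSumConnectivity_self (n Δ : ℕ) :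
    spiderSumConnectivity n Δ Δ =
      ((n : ℝ) - 1 - 2 * Δ) / 2 + (Δ : ℝ) / √3 + (Δ : ℝ) / √((Δ : ℝ) + 2) := by
  unfold spiderSumConnectivity
  ring

lemma StrictMono.le_and_eq_iff {α β : Type*} [LinearOrder α] [Preorder β] {f : α → β}
    (hf : StrictMono f) {a b : α} (hab : a ≤ b) : f a ≤ f b ∧ (f a = f b ↔ a = b) :=
  ⟨hf.monotone hab, hf.injective.eq_iff⟩

theorem stmt_14 (n Δ : ℕ) (hΔ : 3 ≤ Δ) :
    StrictMono (fun k : ℕ =>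
      ((Δ : ℝ) - k) / Real.sqrt ((Δ : ℝ) + 1) + (k : ℝ) / Real.sqrt ((Δ : ℝ) + 2) +
        (k : ℝ) / Real.sqrt 3 + ((n : ℝ) - 1 - Δ - k) / 2) ∧
    (n ≤ 2 * Δ → Δ ≤ n - 1 →
      ∀ k : ℕ, k ≤ n - Δ - 1 →
        (((Δ : ℝ) - k) / Real.sqrt ((Δ : ℝ) + 1) + (k : ℝ) / Real.sqrt ((Δ : ℝ) + 2) +
            (k : ℝ) / Real.sqrt 3 + ((n : ℝ) - 1 - Δ - k) / 2 ≤
          (2 * (Δ : ℝ) - n + 1) / Real.sqrt ((Δ : ℝ) + 1) +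
            ((n : ℝ) - Δ - 1) / Real.sqrt ((Δ : ℝ) + 2) + ((n : ℝ) - Δ - 1) / Real.sqrt 3) ∧
        (((Δ : ℝ) - k) / Real.sqrt ((Δ : ℝ) + 1) + (k : ℝ) / Real.sqrt ((Δ : ℝ) + 2) +
            (k : ℝ) / Real.sqrt 3 + ((n : ℝ) - 1 - Δ - k) / 2 =
          (2 * (Δ : ℝ) - n + 1) / Real.sqrt ((Δ : ℝ) + 1) +
            ((n : ℝ) - Δ - 1) / Real.sqrt ((Δ : ℝ) + 2) + ((n : ℝ) - Δ - 1) / Real.sqrt 3 ↔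
          k = n - Δ - 1)) ∧
    (2 * Δ ≤ n - 1 →
      ∀ k : ℕ, k ≤ Δ →
        (((Δ : ℝ) - k) / Real.sqrt ((Δ : ℝ) + 1) + (k : ℝ) / Real.sqrt ((Δ : ℝ) + 2) +
            (k : ℝ) / Real.sqrt 3 + ((n : ℝ) - 1 - Δ - k) / 2 ≤
          ((n : ℝ) - 1 - 2 * Δ) / 2 + (Δ : ℝ) / Real.sqrt 3 + (Δ : ℝ) / Real.sqrt ((Δ : ℝ) + 2)) ∧
        (((Δ : ℝ) - k) / Real.sqrt ((Δ : ℝ) + 1) + (k : ℝ) / Real.sqrt ((Δ : ℝ) + 2) +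
            (k : ℝ) / Real.sqrt 3 + ((n : ℝ) - 1 - Δ - k) / 2 =
          ((n : ℝ) - 1 - 2 * Δ) / 2 + (Δ : ℝ) / Real.sqrt 3 + (Δ : ℝ) / Real.sqrt ((Δ : ℝ) + 2) ↔
          k = Δ)) := by
  have hmono := spiderSumConnectivity_strictMono n hΔ
  refine ⟨hmono, fun _ hΔn k hk => ?_, fun _ k hk => ?_⟩
  · have h := hmono.le_and_eq_iff hk
    rwa [spiderSumConnectivity_sub_sub_one (by omega)] at h
  · have h := hmono.le_and_eq_iff hk
    rwa [spiderSumConnectivity_self] at h
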